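/- Let l = (l₁, l₂) and n = (n₁, n₂) be pairs of integers with l₁ ≡ n₁ (mod 2) and l₂ ≡ n₂ (mod 2), and define q(λ₁, λ₂) = q_{l₁,n₁}(λ₁) · q_{l₂,n₂}(λ₂). Let φ : ℂ² → ℂ be entire. Then the following are equivalent: (i) φ(−λ₁, λ₂) · q(λ₁, λ₂) = φ(λ₁, λ₂) · q(−λ₁, λ₂) and φ(λ₁, −λ₂) · q(λ₁, λ₂) = φ(λ₁, λ₂) · q(λ₁, −λ₂) for all (λ₁, λ₂) ∈ ℂ², and φ(λ₁, λ₂) = 0 whenever q_{l₁,n₁}(λ₁) = 0 or q_{l₂,n₂}(λ₂) = 0; (ii) there exists an entire function h : ℂ² → ℂ with h(λ₁, λ₂) = h(−λ₁, λ₂) = h(λ₁, −λ₂) for all (λ₁, λ₂) such that φ(λ₁, λ₂) = h(λ₁, λ₂) · q(λ₁, λ₂) for all (λ₁, λ₂) ∈ ℂ². (This is Theorem 'Intertwining condition in Level 3' for SL(2,ℝ) × SL(2,ℝ) in concrete form: condition (i) is the translation of the intertwining condition (D.3).) -/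

import Mathlib

open Finset in
/-- The polynomial `q_{a,b}` (Definition of `q_{n,m}` for `SL(2,ℝ)`), for integers
`a ≡ b (mod 2)`.  Here `0` is regarded as having the same sign as any integer, which is
encoded by the condition `0 ≤ a * b`. -/
noncomputable def qPoly (a b : ℤ) (z : ℂ) : ℂ :=
  if a = b then 1
  else if 0 ≤ a * b then
    if b.natAbs < a.natAbs then
      ∏ j ∈ range ((a.natAbs - b.natAbs) / 2), (z + (((b.natAbs : ℂ) + 1) / 2 + (j : ℂ)))
    else
      ∏ j ∈ range ((b.natAbs - a.natAbs) / 2), (z - (((a.natAbs : ℂ) + 1) / 2 + (j : ℂ)))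
  else
    ∏ j ∈ range ((a.natAbs + b.natAbs) / 2), (z + (((a.natAbs : ℂ) - 1) / 2 - (j : ℂ)))

/-!
Write `p = q_{l₁,n₁}` and `q = q_{l₂,n₂}`; both are products of distinct linear factors, so the
content of (i) ⇒ (ii) is division. An entire `φ` on `ℂ²` vanishing on the line `λ₁ = c` equals
`(λ₁ - c) ψ` with `ψ` the difference quotient in `λ₁`. Each slice `ψ(·, λ₂)` is entire, and so is
`ψ(ζ, ·)` for `ζ ≠ c`; hence the iterated Cauchy formula over a torus `|ζ - c| = R, |η - η₀| = R`
reproduces `ψ` inside it, and a Cauchy integral over a torus is jointly holomorphic. Dividing out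
all factors gives `φ = h · p q`, and the functional equations give
`h(-λ₁, λ₂) = h(λ) = h(λ₁, -λ₂)` off finitely many lines, hence everywhere by continuity.
-/

open Real Complex Metric MeasureTheory Set Filter Topology ContinuousLinearMap Finset

noncomputable section

theorem hasFDerivAt_inv_sub_mul_inv_sub {𝕜 : Type*} [NontriviallyNormedField 𝕜] {p q : 𝕜}
    {x : 𝕜 × 𝕜} (hp : p ≠ x.1) (hq : q ≠ x.2) :
    HasFDerivAt (fun y : 𝕜 × 𝕜 => (p - y.1)⁻¹ * (q - y.2)⁻¹)
      (((p - x.1)⁻¹ ^ 2 * (q - x.2)⁻¹) • fst 𝕜 𝕜 𝕜 + ((p - x.1)⁻¹ * (q - x.2)⁻¹ ^ 2) • snd 𝕜 𝕜 𝕜)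
      x := by
  have h₁ := (hasDerivAt_inv (sub_ne_zero.2 hp)).comp_hasFDerivAt x
    ((hasFDerivAt_fst (𝕜 := 𝕜) (p := x)).const_sub p)
  have h₂ := (hasDerivAt_inv (sub_ne_zero.2 hq)).comp_hasFDerivAt x
    ((hasFDerivAt_snd (𝕜 := 𝕜) (p := x)).const_sub q)
  refine (h₁.mul h₂).congr_fderiv (ext fun y => ?_)
  simp only [Function.comp_apply, add_apply, smul_apply, neg_apply, coe_fst', coe_snd',
    smul_eq_mul, inv_pow]
  ring

theorem norm_smul_fst_add_smul_snd_le {𝕜 : Type*} [NontriviallyNormedField 𝕜] {u v : 𝕜} {C : ℝ}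
    (hu : ‖u‖ ≤ C) (hv : ‖v‖ ≤ C) :
    ‖(u ^ 2 * v) • fst 𝕜 𝕜 𝕜 + (u * v ^ 2) • snd 𝕜 𝕜 𝕜‖ ≤ 2 * C ^ 3 := by
  have hC : 0 ≤ C := (norm_nonneg u).trans hu
  refine opNorm_le_bound _ (by positivity) fun y => ?_
  simp only [add_apply, smul_apply, coe_fst', coe_snd', smul_eq_mul]
  refine (norm_add_le _ _).trans ?_
  simp only [norm_mul, norm_pow]
  calc _ ≤ C ^ 2 * C * ‖y‖ + C * C ^ 2 * ‖y‖ := by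
        gcongr
        exacts [norm_fst_le y, norm_snd_le y]
    _ = 2 * C ^ 3 * ‖y‖ := by ring

theorem le_norm_sub_of_mem_sphere {E : Type*} [SeminormedAddCommGroup E] {p z a : E} {R r : ℝ}
    (hp : p ∈ sphere a R) (hz : dist z a + r ≤ R) : r ≤ ‖p - z‖ := by
  rw [mem_sphere] at hp
  have := dist_triangle p z a
  rw [← dist_eq_norm]
  linarith

theorem exists_forall_le_norm_sub_of_mem_ball {a b : ℂ} {R : ℝ} {x₀ : ℂ × ℂ}
    (hx₀ : x₀ ∈ ball a R ×ˢ ball b R) :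
    ∃ r > 0, ∀ x ∈ ball x₀.1 r ×ˢ ball x₀.2 r, ∀ p ∈ sphere a R, ∀ q ∈ sphere b R,
      r ≤ ‖p - x.1‖ ∧ r ≤ ‖q - x.2‖ := by
  obtain ⟨hx₁, hx₂⟩ := hx₀
  rw [mem_ball] at hx₁ hx₂
  refine ⟨min (R - dist x₀.1 a) (R - dist x₀.2 b) / 2, by positivity, ?_⟩
  rintro x ⟨h₁, h₂⟩ p hp q hq
  rw [mem_ball] at h₁ h₂
  have := min_le_left (R - dist x₀.1 a) (R - dist x₀.2 b)
  have := min_le_right (R - dist x₀.1 a) (R - dist x₀.2 b)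
  exact ⟨le_norm_sub_of_mem_sphere hp (by linarith [dist_triangle x.1 x₀.1 a]),
    le_norm_sub_of_mem_sphere hq (by linarith [dist_triangle x.2 x₀.2 b])⟩

theorem differentiableOn_integral_mul_inv_sub_mul_inv_sub {α : Type*} [MeasurableSpace α]
    {μ : Measure α} {g : α → ℂ} (hg : Integrable g μ) {p q : α → ℂ} (hp : Measurable p)
    (hq : Measurable q) {a b : ℂ} {R : ℝ} (hpR : ∀ θ, p θ ∈ sphere a R)
    (hqR : ∀ θ, q θ ∈ sphere b R) :
    DifferentiableOn ℂ (fun x : ℂ × ℂ => ∫ θ, g θ * ((p θ - x.1)⁻¹ * (q θ - x.2)⁻¹) ∂μ)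
      (ball a R ×ˢ ball b R) := by
  intro x₀ hx₀
  obtain ⟨r, hr, hfar⟩ := exists_forall_le_norm_sub_of_mem_ball hx₀
  set s := ball x₀.1 r ×ˢ ball x₀.2 r
  have hne : ∀ θ, ∀ x ∈ s, p θ ≠ x.1 ∧ q θ ≠ x.2 := fun θ x hx =>
    ⟨sub_ne_zero.1 (norm_pos_iff.1 (hr.trans_le (hfar x hx _ (hpR θ) _ (hqR θ)).1)),
      sub_ne_zero.1 (norm_pos_iff.1 (hr.trans_le (hfar x hx _ (hpR θ) _ (hqR θ)).2))⟩
  have hinv : ∀ θ, ∀ x ∈ s, ‖(p θ - x.1)⁻¹‖ ≤ r⁻¹ ∧ ‖(q θ - x.2)⁻¹‖ ≤ r⁻¹ := fun θ x hx =>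
    ⟨by rw [norm_inv]; exact inv_anti₀ hr (hfar x hx _ (hpR θ) _ (hqR θ)).1,
      by rw [norm_inv]; exact inv_anti₀ hr (hfar x hx _ (hpR θ) _ (hqR θ)).2⟩
  have hmeas : ∀ x : ℂ × ℂ, Measurable fun θ => (p θ - x.1)⁻¹ * (q θ - x.2)⁻¹ := fun x =>
    (hp.sub_const _).inv.mul (hq.sub_const _).inv
  refine (hasFDerivAt_integral_of_dominated_of_fderiv_le
    (F' := fun x θ => g θ • (((p θ - x.1)⁻¹ ^ 2 * (q θ - x.2)⁻¹) • fst ℂ ℂ ℂ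
      + ((p θ - x.1)⁻¹ * (q θ - x.2)⁻¹ ^ 2) • snd ℂ ℂ ℂ))
    (bound := fun θ => ‖g θ‖ * (2 * r⁻¹ ^ 3))
    (prod_mem_nhds (ball_mem_nhds _ hr) (ball_mem_nhds _ hr))
    (Eventually.of_forall fun x => hg.aestronglyMeasurable.mul (hmeas x).aestronglyMeasurable)
    ?_ ?_ ?_ (hg.norm.mul_const _) ?_).differentiableAt.differentiableWithinAt
  · have hx₀ : x₀ ∈ s := ⟨mem_ball_self hr, mem_ball_self hr⟩
    refine hg.mul_bdd (c := r⁻¹ * r⁻¹) (hmeas x₀).aestronglyMeasurable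
      (Eventually.of_forall fun θ => ?_)
    rw [norm_mul]
    exact mul_le_mul (hinv θ x₀ hx₀).1 (hinv θ x₀ hx₀).2 (norm_nonneg _) (by positivity)
  · exact hg.aestronglyMeasurable.smul
      ((((hp.sub_const _).inv.pow_const 2).mul (hq.sub_const _).inv).smul_const _ |>.add
        (((hp.sub_const _).inv.mul ((hq.sub_const _).inv.pow_const 2)).smul_const _)
        ).aestronglyMeasurable
  · refine Eventually.of_forall fun θ x hx => ?_
    rw [norm_smul]
    exact mul_le_mul_of_nonneg_left
      (norm_smul_fst_add_smul_snd_le (hinv θ x hx).1 (hinv θ x hx).2) (norm_nonneg _)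
  · exact Eventually.of_forall fun θ x hx =>
      (hasFDerivAt_inv_sub_mul_inv_sub (hne θ x hx).1 (hne θ x hx).2).const_mul (g θ)

def torusCauchyIntegral (F : ℂ × ℂ → ℂ) (a b : ℂ) (R : ℝ) (x : ℂ × ℂ) : ℂ :=
  (2 * π * I)⁻¹ * ∮ ζ in C(a, R), (ζ - x.1)⁻¹ *
    ((2 * π * I)⁻¹ * ∮ η in C(b, R), (η - x.2)⁻¹ * F (ζ, η))

theorem torusCauchyIntegral_eq {F : ℂ × ℂ → ℂ} {a b : ℂ} {R : ℝ} {x : ℂ × ℂ}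
    (hx₁ : x.1 ∈ ball a R) (hx₂ : x.2 ∈ ball b R)
    (hF₁ : DiffContOnCl ℂ (fun u => F (u, x.2)) (ball a R))
    (hF₂ : ∀ ζ ∈ sphere a R, DiffContOnCl ℂ (fun v => F (ζ, v)) (ball b R)) :
    torusCauchyIntegral F a b R x = F x := by
  have hR : 0 ≤ R := (dist_nonneg.trans_lt hx₁).le
  have inner : EqOn
      (fun ζ => (ζ - x.1)⁻¹ * ((2 * π * I)⁻¹ * ∮ η in C(b, R), (η - x.2)⁻¹ * F (ζ, η)))
      (fun ζ => (ζ - x.1)⁻¹ • F (ζ, x.2)) (sphere a R) := fun ζ hζ => by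
    simp only [smul_eq_mul]
    congr 1
    simpa only [smul_eq_mul] using (hF₂ ζ hζ).two_pi_i_inv_smul_circleIntegral_sub_inv_smul hx₂
  rw [torusCauchyIntegral, circleIntegral.integral_congr hR inner]
  simpa only [smul_eq_mul] using hF₁.two_pi_i_inv_smul_circleIntegral_sub_inv_smul hx₁

theorem integrable_prod_restrict_Ioc {f : ℝ × ℝ → ℂ} (hf : Continuous f) (T : ℝ) :
    Integrable f ((volume.restrict (Ioc 0 T)).prod (volume.restrict (Ioc 0 T))) := by
  rw [Measure.prod_restrict, ← Measure.volume_eq_prod]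
  exact (hf.continuousOn.integrableOn_compact (isCompact_Icc.prod isCompact_Icc)).mono_set
    (prod_mono Ioc_subset_Icc_self Ioc_subset_Icc_self)

/-- `F dζ dη` in the angle coordinates of the torus `C(a, R) × C(b, R)`. -/
def torusPullback (F : ℂ × ℂ → ℂ) (a b : ℂ) (R : ℝ) (θ : ℝ × ℝ) : ℂ :=
  circleMap 0 R θ.1 * I * (circleMap 0 R θ.2 * I) * F (circleMap a R θ.1, circleMap b R θ.2)

theorem continuous_torusPullback {F : ℂ × ℂ → ℂ} {a b : ℂ} {R : ℝ} (hR : 0 ≤ R)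
    (hF : ContinuousOn F (sphere a R ×ˢ sphere b R)) : Continuous (torusPullback F a b R) :=
  ((continuous_circleMap 0 R).comp continuous_fst).mul continuous_const |>.mul
    (((continuous_circleMap 0 R).comp continuous_snd).mul continuous_const) |>.mul
    (hF.comp_continuous (((continuous_circleMap a R).comp continuous_fst).prodMk
      ((continuous_circleMap b R).comp continuous_snd)) fun θ =>
        ⟨circleMap_mem_sphere a hR θ.1, circleMap_mem_sphere b hR θ.2⟩)

theorem torusCauchyIntegral_eq_integral {F : ℂ × ℂ → ℂ} {a b : ℂ} {R : ℝ}
    (hF : ContinuousOn F (sphere a R ×ˢ sphere b R)) {x : ℂ × ℂ}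
    (hx : x ∈ ball a R ×ˢ ball b R) :
    torusCauchyIntegral F a b R x = (2 * π * I)⁻¹ * ((2 * π * I)⁻¹ *
      ∫ θ, torusPullback F a b R θ *
        ((circleMap a R θ.1 - x.1)⁻¹ * (circleMap b R θ.2 - x.2)⁻¹)
        ∂(volume.restrict (Ioc 0 (2 * π))).prod (volume.restrict (Ioc 0 (2 * π)))) := by
  obtain ⟨hx₁, hx₂⟩ := hx
  have hR : 0 ≤ R := (dist_nonneg.trans_lt hx₁).le
  have hcont : Continuous fun θ : ℝ × ℝ => torusPullback F a b R θ *
      ((circleMap a R θ.1 - x.1)⁻¹ * (circleMap b R θ.2 - x.2)⁻¹) :=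
    (continuous_torusPullback hR hF).mul
      ((((continuous_circleMap a R).comp continuous_fst).sub continuous_const).inv₀
        (fun θ => sub_ne_zero.2 (circleMap_ne_mem_ball hx₁ θ.1)) |>.mul
      ((((continuous_circleMap b R).comp continuous_snd).sub continuous_const).inv₀
        fun θ => sub_ne_zero.2 (circleMap_ne_mem_ball hx₂ θ.2)))
  rw [integral_prod _ (integrable_prod_restrict_Ioc hcont _), torusCauchyIntegral,
    circleIntegral, intervalIntegral.integral_of_le (by positivity)]
  congr 1
  rw [← integral_const_mul]
  refine integral_congr_ae (Eventually.of_forall fun θ₁ => ?_)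
  simp only [torusPullback, circleIntegral,
    intervalIntegral.integral_of_le (by positivity : (0:ℝ) ≤ 2 * π), deriv_circleMap,
    smul_eq_mul, ← integral_const_mul]
  exact integral_congr_ae (Eventually.of_forall fun θ₂ => by ring)

theorem differentiableOn_torusCauchyIntegral {F : ℂ × ℂ → ℂ} {a b : ℂ} {R : ℝ}
    (hF : ContinuousOn F (sphere a R ×ˢ sphere b R)) :
    DifferentiableOn ℂ (torusCauchyIntegral F a b R) (ball a R ×ˢ ball b R) := by
  rcases lt_or_ge R 0 with hR | hR
  · simp only [ball_eq_empty.2 hR.le, empty_prod, differentiableOn_empty]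
  refine ((differentiableOn_integral_mul_inv_sub_mul_inv_sub
    (integrable_prod_restrict_Ioc (continuous_torusPullback hR hF) _)
    ((continuous_circleMap a R).comp continuous_fst).measurable
    ((continuous_circleMap b R).comp continuous_snd).measurable
    (fun θ => circleMap_mem_sphere a hR θ.1) (fun θ => circleMap_mem_sphere b hR θ.2)).const_mul
    _ |>.const_mul _).congr fun x hx => torusCauchyIntegral_eq_integral hF hx

theorem dslope_fst_of_ne (φ : ℂ × ℂ → ℂ) {c : ℂ} {x : ℂ × ℂ} (h : x.1 ≠ c) :
    dslope (fun u => φ (u, x.2)) c x.1 = (x.1 - c)⁻¹ * (φ x - φ (c, x.2)) := by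
  rw [dslope_of_ne _ h, slope_def_field, div_eq_inv_mul]

theorem differentiable_dslope_fst {φ : ℂ × ℂ → ℂ} (hφ : Differentiable ℂ φ) (c : ℂ) :
    Differentiable ℂ fun x : ℂ × ℂ => dslope (fun u => φ (u, x.2)) c x.1 := by
  set ψ := fun x : ℂ × ℂ => dslope (fun u => φ (u, x.2)) c x.1
  have hψ : EqOn ψ (fun x => (x.1 - c)⁻¹ * (φ x - φ (c, x.2))) {x | x.1 ≠ c} :=
    fun x hx => dslope_fst_of_ne φ hx
  have hslice₁ : ∀ v, Differentiable ℂ fun u => ψ (u, v) := fun v =>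
    differentiableOn_univ.1 <| (Complex.differentiableOn_dslope univ_mem).2
      (hφ.comp (differentiable_id.prodMk (differentiable_const v))).differentiableOn
  have hslice₂ : ∀ ζ ≠ c, Differentiable ℂ fun v => ψ (ζ, v) := fun ζ hζ => by
    rw [show (fun v => ψ (ζ, v)) = fun v => (ζ - c)⁻¹ * (φ (ζ, v) - φ (c, v)) from
      funext fun v => hψ (x := (ζ, v)) hζ]
    fun_prop
  intro x₀
  set R := dist x₀.1 c + 1
  have hR : 0 < R := by positivity
  have hcont : ContinuousOn ψ (sphere c R ×ˢ sphere x₀.2 R) := by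
    have hφc := hφ.continuous
    refine ContinuousOn.congr ?_ fun x hx => hψ (ne_of_mem_sphere hx.1 hR.ne')
    exact (ContinuousOn.inv₀ (by fun_prop) fun x hx =>
      sub_ne_zero.2 (ne_of_mem_sphere hx.1 hR.ne')).mul (by fun_prop)
  have heq : EqOn ψ (torusCauchyIntegral ψ c x₀.2 R) (ball c R ×ˢ ball x₀.2 R) :=
    fun x hx => (torusCauchyIntegral_eq hx.1 hx.2 (hslice₁ x.2).diffContOnCl
      fun ζ hζ => (hslice₂ ζ (ne_of_mem_sphere hζ hR.ne')).diffContOnCl).symm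
  refine ((differentiableOn_torusCauchyIntegral hcont).congr heq).differentiableAt
    (prod_mem_nhds (isOpen_ball.mem_nhds ?_) (ball_mem_nhds _ hR))
  simp [R]

theorem prod_sub_eq_zero_iff {R : Type*} [CommRing R] [IsDomain R] {S : Finset R} {z : R} :
    ∏ s ∈ S, (z - s) = 0 ↔ z ∈ S := by
  simp [prod_eq_zero_iff, sub_eq_zero]

theorem exists_differentiable_eq_sub_fst_mul {φ : ℂ × ℂ → ℂ} (hφ : Differentiable ℂ φ) {c : ℂ}
    (hc : ∀ w, φ (c, w) = 0) :
    ∃ ψ : ℂ × ℂ → ℂ, Differentiable ℂ ψ ∧ ∀ x, φ x = (x.1 - c) * ψ x :=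
  ⟨_, differentiable_dslope_fst hφ c, fun x => by
    simpa [hc] using (sub_smul_dslope (fun u => φ (u, x.2)) c x.1).symm⟩

theorem exists_differentiable_eq_prod_sub_fst_mul (S : Finset ℂ) {φ : ℂ × ℂ → ℂ}
    (hφ : Differentiable ℂ φ) (hS : ∀ x : ℂ × ℂ, x.1 ∈ S → φ x = 0) :
    ∃ ψ : ℂ × ℂ → ℂ, Differentiable ℂ ψ ∧ ∀ x, φ x = (∏ s ∈ S, (x.1 - s)) * ψ x := by
  induction S using Finset.induction_on generalizing φ with
  | empty => exact ⟨φ, hφ, by simp⟩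
  | insert c S hc ih =>
    obtain ⟨ψ₁, hψ₁, hφψ₁⟩ :=
      exists_differentiable_eq_sub_fst_mul hφ fun w => hS (c, w) (mem_insert_self c S)
    obtain ⟨ψ, hψ, hψ₁ψ⟩ := ih hψ₁ fun x hx => by
      have := hS x (mem_insert_of_mem hx)
      rw [hφψ₁] at this
      exact (mul_eq_zero.1 this).resolve_left (sub_ne_zero.2 (ne_of_mem_of_not_mem hx hc))
    exact ⟨ψ, hψ, fun x => by rw [hφψ₁, hψ₁ψ, prod_insert hc, mul_assoc]⟩

theorem exists_differentiable_eq_prod_sub_snd_mul (T : Finset ℂ) {φ : ℂ × ℂ → ℂ}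
    (hφ : Differentiable ℂ φ) (hT : ∀ x : ℂ × ℂ, x.2 ∈ T → φ x = 0) :
    ∃ ψ : ℂ × ℂ → ℂ, Differentiable ℂ ψ ∧ ∀ x, φ x = (∏ t ∈ T, (x.2 - t)) * ψ x := by
  have hswap : Differentiable ℂ (Prod.swap : ℂ × ℂ → ℂ × ℂ) :=
    differentiable_snd.prodMk differentiable_fst
  obtain ⟨ψ, hψ, h⟩ :=
    exists_differentiable_eq_prod_sub_fst_mul T (hφ.comp hswap) fun x hx => hT x.swap hx
  exact ⟨ψ ∘ Prod.swap, hψ.comp hswap, fun x => h x.swap⟩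

theorem exists_differentiable_eq_mul_prod_sub (S T : Finset ℂ) {φ : ℂ × ℂ → ℂ}
    (hφ : Differentiable ℂ φ) (hS : ∀ x : ℂ × ℂ, x.1 ∈ S → φ x = 0)
    (hT : ∀ x : ℂ × ℂ, x.2 ∈ T → φ x = 0) :
    ∃ ψ : ℂ × ℂ → ℂ, Differentiable ℂ ψ ∧
      ∀ x, φ x = ψ x * ((∏ s ∈ S, (x.1 - s)) * ∏ t ∈ T, (x.2 - t)) := by
  obtain ⟨ψ₁, hψ₁, hφψ₁⟩ := exists_differentiable_eq_prod_sub_fst_mul S hφ hS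
  -- off the finitely many lines `x.1 ∈ S` this follows from `hT`; continuity does the rest
  have hT₁ : ∀ x : ℂ × ℂ, x.2 ∈ T → ψ₁ x = 0 := fun x hx => by
    have hslice : (fun u => ψ₁ (u, x.2)) = fun _ => 0 :=
      Continuous.ext_on (S.countable_toSet.dense_compl ℂ)
        (hψ₁.continuous.comp (.prodMk_left x.2)) continuous_const
        fun u hu => by
          have := hT (u, x.2) hx
          rw [hφψ₁] at this
          exact (mul_eq_zero.1 this).resolve_left (mt prod_sub_eq_zero_iff.1 hu)
    exact congrFun hslice x.1
  obtain ⟨ψ, hψ, hψ₁ψ⟩ := exists_differentiable_eq_prod_sub_snd_mul T hψ₁ hT₁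
  exact ⟨ψ, hψ, fun x => by rw [hφψ₁, hψ₁ψ]; ring⟩

theorem exists_prod_range_sub_eq_prod_sub {K : Type*} [Field K] [CharZero K] (n : ℕ) (r ε : K)
    (hε : ε ≠ 0) : ∃ S : Finset K, ∀ z, ∏ j ∈ range n, (z - (r + j * ε)) = ∏ s ∈ S, (z - s) := by
  classical
  exact ⟨(range n).image fun j : ℕ => r + j * ε, fun z =>
    (prod_image fun i _ j _ h => by simpa [hε] using h).symm⟩

theorem qPoly_eq_prod_sub (a b : ℤ) : ∃ S : Finset ℂ, ∀ z, qPoly a b z = ∏ s ∈ S, (z - s) := by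
  unfold qPoly
  split_ifs
  · exact ⟨∅, by simp⟩
  · obtain ⟨S, hS⟩ := exists_prod_range_sub_eq_prod_sub ((a.natAbs - b.natAbs) / 2)
      (-(((b.natAbs : ℂ) + 1) / 2)) (-1) (by norm_num)
    exact ⟨S, fun z => by rw [← hS]; exact prod_congr rfl fun j _ => by ring⟩
  · obtain ⟨S, hS⟩ := exists_prod_range_sub_eq_prod_sub ((b.natAbs - a.natAbs) / 2)
      (((a.natAbs : ℂ) + 1) / 2) 1 one_ne_zero
    exact ⟨S, fun z => by rw [← hS]; exact prod_congr rfl fun j _ => by ring⟩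
  · obtain ⟨S, hS⟩ := exists_prod_range_sub_eq_prod_sub ((a.natAbs + b.natAbs) / 2)
      (-(((a.natAbs : ℂ) - 1) / 2)) 1 one_ne_zero
    exact ⟨S, fun z => by rw [← hS]; exact prod_congr rfl fun j _ => by ring⟩

theorem eq_of_mul_eq_mul_of_countable {f g w : ℂ × ℂ → ℂ} (hf : Continuous f)
    (hg : Continuous g) {A B : Set ℂ} (hA : A.Countable) (hB : B.Countable)
    (hw : ∀ x : ℂ × ℂ, x.1 ∉ A → x.2 ∉ B → w x ≠ 0) (h : ∀ x, f x * w x = g x * w x) :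
    f = g :=
  hf.ext_on ((hA.dense_compl ℂ).prod (hB.dense_compl ℂ)) hg fun x hx =>
    mul_right_cancel₀ (hw x hx.1 hx.2) (h x)

end

theorem stmt_5_general (l₁ l₂ n₁ n₂ : ℤ)
    (φ : ℂ × ℂ → ℂ) (hφ : Differentiable ℂ φ) :
    ((∀ z : ℂ × ℂ, φ (-z.1, z.2) * (qPoly l₁ n₁ z.1 * qPoly l₂ n₂ z.2) =
        φ z * (qPoly l₁ n₁ (-z.1) * qPoly l₂ n₂ z.2)) ∧
      (∀ z : ℂ × ℂ, φ (z.1, -z.2) * (qPoly l₁ n₁ z.1 * qPoly l₂ n₂ z.2) =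
        φ z * (qPoly l₁ n₁ z.1 * qPoly l₂ n₂ (-z.2))) ∧
      (∀ z : ℂ × ℂ, (qPoly l₁ n₁ z.1 = 0 ∨ qPoly l₂ n₂ z.2 = 0) → φ z = 0)) ↔
    (∃ h : ℂ × ℂ → ℂ, Differentiable ℂ h ∧
      (∀ z : ℂ × ℂ, h (-z.1, z.2) = h z) ∧ (∀ z : ℂ × ℂ, h (z.1, -z.2) = h z) ∧
      ∀ z : ℂ × ℂ, φ z = h z * (qPoly l₁ n₁ z.1 * qPoly l₂ n₂ z.2)) := by
  obtain ⟨S, hS⟩ := qPoly_eq_prod_sub l₁ n₁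
  obtain ⟨T, hT⟩ := qPoly_eq_prod_sub l₂ n₂
  set p := qPoly l₁ n₁
  set q := qPoly l₂ n₂
  have hp : ∀ u, p u = 0 ↔ u ∈ S := fun u => by rw [hS]; exact prod_sub_eq_zero_iff
  have hq : ∀ v, q v = 0 ↔ v ∈ T := fun v => by rw [hT]; exact prod_sub_eq_zero_iff
  constructor
  · rintro ⟨heq₁, heq₂, hvan⟩
    obtain ⟨ψ, hψ, hφψ⟩ := exists_differentiable_eq_mul_prod_sub S T hφ
      (fun x hx => hvan x (.inl ((hp _).2 hx))) (fun x hx => hvan x (.inr ((hq _).2 hx)))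
    simp only [← hS, ← hT] at hφψ
    simp only [hφψ] at heq₁ heq₂
    have hψc := hψ.continuous
    have hS' : ((S : Set ℂ) ∪ -S).Countable :=
      S.countable_toSet.union (S.countable_toSet.preimage neg_injective)
    have hT' : ((T : Set ℂ) ∪ -T).Countable :=
      T.countable_toSet.union (T.countable_toSet.preimage neg_injective)
    have hψ₁ : (fun x : ℂ × ℂ => ψ (-x.1, x.2)) = ψ :=
      eq_of_mul_eq_mul_of_countable (w := fun x => p x.1 * p (-x.1) * q x.2 ^ 2) (by fun_prop)
        hψc hS' T.countable_toSet (fun x _ _ => by simp_all) fun x => by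
          linear_combination heq₁ x
    have hψ₂ : (fun x : ℂ × ℂ => ψ (x.1, -x.2)) = ψ :=
      eq_of_mul_eq_mul_of_countable (w := fun x => p x.1 ^ 2 * q x.2 * q (-x.2)) (by fun_prop)
        hψc S.countable_toSet hT' (fun x _ _ => by simp_all) fun x => by
          linear_combination heq₂ x
    exact ⟨ψ, hψ, congrFun hψ₁, congrFun hψ₂, hφψ⟩
  · rintro ⟨ψ, -, hψ₁, hψ₂, hφψ⟩
    refine ⟨fun x => ?_, fun x => ?_, fun x hx => ?_⟩
    · rw [hφψ, hφψ x, hψ₁]; ring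
    · rw [hφψ, hφψ x, hψ₂]; ring
    · rw [hφψ x]; rcases hx with hx | hx <;> simp [hx]

/-- Intertwining condition in Level 3 for `SL(2,ℝ) × SL(2,ℝ)`: with
`q(λ₁,λ₂) = q_{l₁,n₁}(λ₁)·q_{l₂,n₂}(λ₂)`, an entire `φ : ℂ² → ℂ` satisfies the two
functional equations and the vanishing condition at zeros of the factors if and only if
`φ = h · q` for an entire `h` even in each variable. -/
theorem stmt_5 (l₁ l₂ n₁ n₂ : ℤ) (h1 : l₁ % 2 = n₁ % 2) (h2 : l₂ % 2 = n₂ % 2)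
    (φ : ℂ × ℂ → ℂ) (hφ : Differentiable ℂ φ) :
    ((∀ z : ℂ × ℂ, φ (-z.1, z.2) * (qPoly l₁ n₁ z.1 * qPoly l₂ n₂ z.2) =
        φ z * (qPoly l₁ n₁ (-z.1) * qPoly l₂ n₂ z.2)) ∧
      (∀ z : ℂ × ℂ, φ (z.1, -z.2) * (qPoly l₁ n₁ z.1 * qPoly l₂ n₂ z.2) =
        φ z * (qPoly l₁ n₁ z.1 * qPoly l₂ n₂ (-z.2))) ∧
      (∀ z : ℂ × ℂ, (qPoly l₁ n₁ z.1 = 0 ∨ qPoly l₂ n₂ z.2 = 0) → φ z = 0)) ↔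
    (∃ h : ℂ × ℂ → ℂ, Differentiable ℂ h ∧
      (∀ z : ℂ × ℂ, h (-z.1, z.2) = h z) ∧ (∀ z : ℂ × ℂ, h (z.1, -z.2) = h z) ∧
      ∀ z : ℂ × ℂ, φ z = h z * (qPoly l₁ n₁ z.1 * qPoly l₂ n₂ z.2)) :=
  stmt_5_general l₁ l₂ n₁ n₂ φ hφ
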